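/- Let x be a mixed action, p, p' ∈ Δ(K) with p(k) > 0 for all k ∈ K, and x' := T(x,p,p'). Then for every i ∈ I and k ∈ K, |x'(i|k) − x(i|k)| ≤ ‖p − p'‖_∞ · ‖1/p‖_∞, where ‖p − p'‖_∞ := max_k |p(k) − p'(k)| and ‖1/p‖_∞ := max_k 1/p(k). -/

import Mathlib

open Finset

noncomputable section
open Classical

/-- `p` is an element of the probability simplex Δ(K). -/
def pSimplex {K : Type*} [Fintype K] (p : K → ℝ) : Prop :=
  (∀ k, 0 ≤ p k) ∧ ∑ k, p k = 1

/-- `x : K → Δ(I)` is a mixed action, written `x k i = x(i|k)`. -/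
def MixedAction {K I : Type*} [Fintype K] [Fintype I] (x : K → I → ℝ) : Prop :=
  (∀ k i, 0 ≤ x k i) ∧ ∀ k, ∑ i, x k i = 1

/-- Marginal `x̄^p(i) = ∑_k p(k)·x(i|k)`. -/
def bar {K I : Type*} [Fintype K] (p : K → ℝ) (x : K → I → ℝ) (i : I) : ℝ :=
  ∑ k, p k * x k i

/-- Posterior `p^x(k|i)`. -/
def post {K I : Type*} [Fintype K] (p : K → ℝ) (x : K → I → ℝ) (i : I) (k : K) : ℝ :=
  if bar p x i ≠ 0 then x k i * p k / bar p x i else p k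

/-- The set `NR[x,ε,p]` of (x,ε)-non-revealing actions at p. -/
def NRset {K I : Type*} [Fintype K] [Fintype I] (x : K → I → ℝ) (ε : ℝ) (p : K → ℝ) :
    Finset I :=
  Finset.univ.filter fun i =>
    bar p x i ≠ 0 ∧ ∀ k, (1 - ε) * bar p x i ≤ x k i ∧ x k i ≤ (1 + ε) * bar p x i

/-- The set `R[x,ε,p]` of (x,ε)-revealing actions at p. -/
def Rset {K I : Type*} [Fintype K] [Fintype I] (x : K → I → ℝ) (ε : ℝ) (p : K → ℝ) :
    Finset I :=
  (Finset.univ.filter fun i => bar p x i ≠ 0) \ NRset x ε p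

/-- `x(A|k) = ∑_{i∈A} x(i|k)`. -/
def xOn {K I : Type*} (x : K → I → ℝ) (A : Finset I) (k : K) : ℝ := ∑ i ∈ A, x k i

/-- `x̄^p(A) = ∑_{i∈A} x̄^p(i)`. -/
def barOn {K I : Type*} [Fintype K] (p : K → ℝ) (x : K → I → ℝ) (A : Finset I) : ℝ :=
  ∑ i ∈ A, bar p x i

/-- The ε-silent mapping `c_ε(x,p)`. -/
def silent {K I : Type*} [Fintype K] [Fintype I] (ε : ℝ) (x : K → I → ℝ) (p : K → ℝ) :
    K → I → ℝ :=
  fun k i =>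
    if i ∈ NRset x ε p then
      ((1 - ε) * xOn x (NRset x ε p) k / barOn p x (NRset x ε p) + ε) * bar p x i
    else (1 - ε) * x k i + ε * bar p x i

/-- Membership in X₀. -/
def InX0 {K I : Type*} [Fintype K] (x : K → I → ℝ) (p p' : K → ℝ) : Prop :=
  (∀ (i : I) (k : K), 0 ≤ p' k + post p x i k - p k) ∧ ∀ k, 0 < p' k

/-- The translation mapping T(x,p,p'). -/
def translAction {K I : Type*} [Fintype K] (x : K → I → ℝ) (p p' : K → ℝ) : K → I → ℝ :=
  fun k i =>
    if InX0 x p p' then bar p x i / p' k * (p' k + post p x i k - p k) else x k i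

/- In X₀ the translated action is `x̄ + p (x − x̄) / p'`, so `x' − x = (x − x̄)(p − p')/p'` and
it suffices to show `p(k) |x(i|k) − x̄(i)| ≤ p'(k)`. Multiplying the defining inequality of X₀
by `x̄(i)` gives the nonnegative numbers `d(i) = p'(k) x̄(i) − p(k) (x̄(i) − x(i|k))`, which sum to
`p'(k)`; hence `0 ≤ d(i) ≤ p'(k)`, and these two bounds are the two halves of the claim. -/

section TranslAction

variable {K I : Type*} [Fintype K] {p p' : K → ℝ} {x : K → I → ℝ}

lemma bar_nonneg (hp : ∀ k, 0 ≤ p k) (hx : ∀ k i, 0 ≤ x k i) (i : I) : 0 ≤ bar p x i :=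
  sum_nonneg fun k _ => mul_nonneg (hp k) (hx k i)

lemma sum_bar [Fintype I] (hp : ∑ k, p k = 1) (hx : ∀ k, ∑ i, x k i = 1) :
    ∑ i, bar p x i = 1 := by
  simp only [bar]
  rw [sum_comm]
  simp only [← mul_sum, hx, mul_one, hp]

lemma bar_le_one [Fintype I] (hp : pSimplex p) (hx : MixedAction x) (i : I) : bar p x i ≤ 1 :=
  sum_bar hp.2 hx.2 ▸ single_le_sum (fun j _ => bar_nonneg hp.1 hx.1 j) (mem_univ i)

lemma bar_mul_post (hp : ∀ k, 0 ≤ p k) (hx : ∀ k i, 0 ≤ x k i) (i : I) (k : K) :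
    bar p x i * post p x i k = p k * x k i := by
  by_cases hb : bar p x i = 0
  · have hterm := (sum_eq_zero_iff_of_nonneg fun k _ => mul_nonneg (hp k) (hx k i)).1 hb k
      (mem_univ k)
    rw [hb, zero_mul, hterm]
  · rw [post, if_pos hb]
    field_simp

lemma translAction_sub_of_inX0 (hp : ∀ k, 0 ≤ p k) (hx : ∀ k i, 0 ≤ x k i)
    (h : InX0 x p p') (i : I) (k : K) :
    translAction x p p' k i - x k i = (x k i - bar p x i) * (p k - p' k) / p' k := by
  have hp'k := (h.2 k).ne'
  have hpost := bar_mul_post hp hx i k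
  rw [translAction, if_pos h, div_mul_eq_mul_div, mul_sub, mul_add, hpost]
  field_simp
  ring

lemma mul_abs_sub_bar_le_of_inX0 [Fintype I] (hp : pSimplex p) (hx : MixedAction x)
    (h : InX0 x p p') (i : I) (k : K) :
    p k * |x k i - bar p x i| ≤ p' k := by
  set d : I → ℝ := fun j => p' k * bar p x j - p k * (bar p x j - x k j)
  have hd_eq (j : I) : d j = bar p x j * (p' k + post p x j k - p k) := by
    have := bar_mul_post hp.1 hx.1 j k
    simp only [d]
    linear_combination -this
  have hd_nonneg (j : I) : 0 ≤ d j :=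
    hd_eq j ▸ mul_nonneg (bar_nonneg hp.1 hx.1 j) (h.1 j k)
  have hd_sum : ∑ j, d j = p' k := by
    simp only [d, sum_sub_distrib, ← mul_sum, sum_bar hp.2 hx.2, hx.2 k]
    ring
  have hd_le : d i ≤ p' k := hd_sum ▸ single_le_sum (fun j _ => hd_nonneg j) (mem_univ i)
  have hb₀ := bar_nonneg hp.1 hx.1 i
  have hb₁ := bar_le_one hp hx i
  have hp'k := (h.2 k).le
  rw [← abs_of_nonneg (hp.1 k), ← abs_mul, abs_le]
  constructor <;> nlinarith [hd_nonneg i]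

end TranslAction

theorem translAction_pointwise_close_general {K I : Type*} [Fintype K] [Fintype I]
    [Nonempty K]
    (x : K → I → ℝ) (hx : MixedAction x)
    (p p' : K → ℝ) (hp : pSimplex p)
    (hpos : ∀ k, 0 < p k) :
    ∀ (i : I) (k : K),
      |translAction x p p' k i - x k i| ≤
        (Finset.univ.sup' Finset.univ_nonempty fun k' => |p k' - p' k'|) *
          Finset.univ.sup' Finset.univ_nonempty fun k' => 1 / p k' := by
  intro i k
  have hM := le_sup' (fun k' => |p k' - p' k'|) (mem_univ k)
  have hS := le_sup' (fun k' => 1 / p k') (mem_univ k)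
  by_cases h : InX0 x p p'
  · have hdev : |x k i - bar p x i| / p' k ≤ 1 / p k := by
      rw [div_le_div_iff₀ (h.2 k) (hpos k)]
      linarith [mul_abs_sub_bar_le_of_inX0 hp hx h i k]
    calc |translAction x p p' k i - x k i|
        = |p k - p' k| * (|x k i - bar p x i| / p' k) := by
          rw [translAction_sub_of_inX0 hp.1 hx.1 h, abs_div, abs_mul, abs_of_pos (h.2 k)]
          ring
      _ ≤ _ := mul_le_mul hM (hdev.trans hS) (div_nonneg (abs_nonneg _) (h.2 k).le)
        ((abs_nonneg _).trans hM)
  · rw [translAction, if_neg h, sub_self, abs_zero]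
    exact mul_nonneg ((abs_nonneg _).trans hM) ((one_div_pos.2 (hpos k)).le.trans hS)

/-- pointwise bound on the translation in terms of ‖p−p'‖_∞·‖1/p‖_∞. -/
theorem translAction_pointwise_close {K I : Type*} [Fintype K] [Fintype I]
    [Nonempty K] [Nonempty I]
    (x : K → I → ℝ) (hx : MixedAction x)
    (p p' : K → ℝ) (hp : pSimplex p) (hp' : pSimplex p')
    (hpos : ∀ k, 0 < p k) :
    ∀ (i : I) (k : K),
      |translAction x p p' k i - x k i| ≤
        (Finset.univ.sup' Finset.univ_nonempty fun k' => |p k' - p' k'|) *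
          Finset.univ.sup' Finset.univ_nonempty fun k' => 1 / p k' :=
  translAction_pointwise_close_general x hx p p' hp hpos
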